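/- For every integer k ≥ 1 there exists a constant C > 0 such that for every integer m ≥ 1, |τ'_m((Ĝ^m)^k)| ≤ C·m^{k/2−1}·e^{−m^{m−1/2}}; in particular, for each fixed k, τ'_m((Ĝ^m)^k) → 0 as m → ∞. -/

import Mathlib

open MeasureTheory

/-- The standard complex Gaussian probability measure on `ℂ`, with density
`z ↦ (1/π) · exp (-|z|²)` with respect to Lebesgue measure on `ℂ ≅ ℝ²`. -/
noncomputable def stdComplexGaussian : Measure ℂ :=
  volume.withDensity fun z => ENNReal.ofReal (Real.exp (-(‖z‖) ^ 2) / Real.pi)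

/-- The joint law of the i.i.d. family `(g_{ij})_{1 ≤ i,j ≤ m}` of standard complex
Gaussian variables, realized as the coordinate functions on `(ℂ^{m×m}, γ^{⊗m²})`. -/
noncomputable def gaussianFamily (m : ℕ) : Measure (Fin m × Fin m → ℂ) :=
  Measure.pi fun _ => stdComplexGaussian

/-- `Ĝ^m = G^m − G̃^m = 1_{Σ_{i,j}|g_{ij}|² > m^{2m}} · (g_{ij}/√m)_{i,j}` : the
truncated-away part of the standard Gaussian random matrix. -/
noncomputable def Ghat (m : ℕ) (g : Fin m × Fin m → ℂ) : Matrix (Fin m) (Fin m) ℂ :=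
  Matrix.of fun i j =>
    if (m : ℝ) ^ (2 * m) < ∑ p : Fin m × Fin m, (‖g p‖) ^ 2 then
      g (i, j) / (Real.sqrt m : ℂ) else 0

/-- `τ'_m(X) = E[(1/m)·tr X]` : the normalized expected trace of a random matrix `X`. -/
noncomputable def tauHat (m k : ℕ) : ℂ :=
  ∫ g : Fin m × Fin m → ℂ, ((m : ℂ)⁻¹ * Matrix.trace ((Ghat m g) ^ k)) ∂gaussianFamily m

/-!
Write `S = ∑ |g_{ij}|²`. Off the event `S > m^{2m}` the matrix `Ĝ^m` vanishes; on it every entry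
has modulus at most `√(S/m)`, so `|(1/m) tr (Ĝ^m)^k| ≤ m^{k/2-1} S^{k/2}`, and
`S^{k/2} ≤ k! e^{√S} ≤ k! e^{1 + S/4} ≤ k! e^{1 - m^{2m}/4} e^{S/2}`.
The weight `e^{S/2}` factorises over the entries, each factor having `γ`-integral `2`, whence
`|τ'_m((Ĝ^m)^k)| ≤ k! e m^{k/2-1} e^{-m^{2m}/4} 2^{m²}`. Finally, with `x = m^m`, which dominates
both `m²` and `m^{m-1/2}`, the exponent `-x²/4 + m² ln 2 + m^{m-1/2} ≤ -x²/4 + 2x` is at most `4`.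
-/

open Real Filter Topology Matrix
open scoped Nat

instance : SigmaFinite stdComplexGaussian :=
  SigmaFinite.withDensity_ofReal _

lemma integral_stdComplexGaussian (f : ℂ → ℝ) :
    ∫ z, f z ∂stdComplexGaussian = ∫ z, exp (-‖z‖ ^ 2) / π * f z := by
  rw [stdComplexGaussian, integral_withDensity_eq_integral_toReal_smul (by fun_prop)
    (ae_of_all _ fun _ => ENNReal.ofReal_lt_top)]
  simp_rw [ENNReal.toReal_ofReal (by positivity : 0 ≤ exp (-‖_‖ ^ 2) / π), smul_eq_mul]

lemma integral_exp_neg_mul_sq_norm_complex {b : ℝ} (hb : 0 < b) :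
    ∫ z : ℂ, exp (-b * ‖z‖ ^ 2) = π / b := by
  rw [GaussianFourier.integral_rexp_neg_mul_sq_norm hb, Complex.finrank_real_complex]
  norm_num

lemma exp_neg_sq_norm_div_pi_mul_exp (c : ℝ) (z : ℂ) :
    exp (-‖z‖ ^ 2) / π * exp (c * ‖z‖ ^ 2) = π⁻¹ * exp (-(1 - c) * ‖z‖ ^ 2) := by
  rw [div_mul_eq_mul_div, ← exp_add, div_eq_inv_mul]
  ring_nf

lemma integral_exp_mul_sq_norm_stdComplexGaussian {c : ℝ} (hc : c < 1) :
    ∫ z, exp (c * ‖z‖ ^ 2) ∂stdComplexGaussian = (1 - c)⁻¹ := by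
  simp_rw [integral_stdComplexGaussian, exp_neg_sq_norm_div_pi_mul_exp, integral_const_mul,
    integral_exp_neg_mul_sq_norm_complex (sub_pos.2 hc)]
  field_simp

lemma integrable_exp_mul_sq_norm_stdComplexGaussian {c : ℝ} (hc : c < 1) :
    Integrable (fun z => exp (c * ‖z‖ ^ 2)) stdComplexGaussian :=
  Integrable.of_integral_ne_zero <| by
    rw [integral_exp_mul_sq_norm_stdComplexGaussian hc]
    exact inv_ne_zero (sub_pos.2 hc).ne'

lemma exp_mul_sum_sq_norm (c : ℝ) {m : ℕ} (g : Fin m × Fin m → ℂ) :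
    exp (c * ∑ p, ‖g p‖ ^ 2) = ∏ p, exp (c * ‖g p‖ ^ 2) := by
  rw [Finset.mul_sum, exp_sum]

lemma integral_exp_mul_sum_sq_norm_gaussianFamily {c : ℝ} (hc : c < 1) (m : ℕ) :
    ∫ g, exp (c * ∑ p, ‖g p‖ ^ 2) ∂gaussianFamily m = (1 - c)⁻¹ ^ (m * m) := by
  simp_rw [exp_mul_sum_sq_norm]
  rw [gaussianFamily, integral_fintype_prod_eq_pow fun z : ℂ => exp (c * ‖z‖ ^ 2),
    integral_exp_mul_sq_norm_stdComplexGaussian hc, Fintype.card_prod, Fintype.card_fin]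

lemma integrable_exp_mul_sum_sq_norm_gaussianFamily {c : ℝ} (hc : c < 1) (m : ℕ) :
    Integrable (fun g => exp (c * ∑ p, ‖g p‖ ^ 2)) (gaussianFamily m) := by
  simp_rw [exp_mul_sum_sq_norm]
  exact Integrable.fintype_prod fun _ => integrable_exp_mul_sq_norm_stdComplexGaussian hc

namespace Matrix

variable {n R : Type*} [Fintype n] [DecidableEq n] [NormedRing R]

theorem norm_pow_succ_apply_le {A : Matrix n n R} {a : ℝ} (hA : ∀ i j, ‖A i j‖ ≤ a) (k : ℕ)
    (i j : n) : ‖(A ^ (k + 1)) i j‖ ≤ Fintype.card n ^ k * a ^ (k + 1) := by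
  induction k generalizing j with
  | zero => simpa using hA i j
  | succ k ih =>
    have ha : 0 ≤ a := (norm_nonneg _).trans (hA i i)
    calc ‖(A ^ (k + 1 + 1)) i j‖ = ‖∑ l, (A ^ (k + 1)) i l * A l j‖ := by
          rw [pow_succ, mul_apply]
      _ ≤ ∑ l, ‖(A ^ (k + 1)) i l‖ * ‖A l j‖ := norm_sum_le_of_le _ fun l _ => norm_mul_le _ _
      _ ≤ ∑ _l : n, Fintype.card n ^ k * a ^ (k + 1) * a := by
          gcongr with l
          exacts [ih l, hA l j]
      _ = Fintype.card n ^ (k + 1) * a ^ (k + 1 + 1) := by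
          rw [Finset.sum_const, Finset.card_univ, nsmul_eq_mul]
          ring

theorem norm_trace_pow_le {A : Matrix n n R} {a : ℝ} (hA : ∀ i j, ‖A i j‖ ≤ a) {k : ℕ}
    (hk : k ≠ 0) : ‖trace (A ^ k)‖ ≤ (Fintype.card n * a) ^ k := by
  obtain ⟨k, rfl⟩ := Nat.exists_eq_succ_of_ne_zero hk
  calc ‖trace (A ^ (k + 1))‖ ≤ ∑ i, ‖(A ^ (k + 1)) i i‖ := norm_sum_le _ _
    _ ≤ ∑ _i : n, Fintype.card n ^ k * a ^ (k + 1) :=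
        Finset.sum_le_sum fun i _ => norm_pow_succ_apply_le hA k i i
    _ = (Fintype.card n * a) ^ (k + 1) := by
        rw [Finset.sum_const, Finset.card_univ, nsmul_eq_mul]
        ring

end Matrix

lemma Ghat_eq_zero {m : ℕ} {g : Fin m × Fin m → ℂ}
    (h : ∑ p, ‖g p‖ ^ 2 ≤ (m : ℝ) ^ (2 * m)) : Ghat m g = 0 := by
  ext i j
  simp [Ghat, h.not_gt]

lemma norm_Ghat_apply_le (m : ℕ) (g : Fin m × Fin m → ℂ) (i j : Fin m) :
    ‖Ghat m g i j‖ ≤ √(∑ p, ‖g p‖ ^ 2) / √m := by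
  have hij : ‖g (i, j)‖ ≤ √(∑ p, ‖g p‖ ^ 2) :=
    le_sqrt_of_sq_le <| Finset.single_le_sum (f := fun p => ‖g p‖ ^ 2) (fun p _ => by positivity)
      (Finset.mem_univ _)
  simp only [Ghat, of_apply]
  split_ifs
  · rw [norm_div, Complex.norm_real, norm_of_nonneg (sqrt_nonneg _)]
    gcongr
  · rw [norm_zero]
    positivity

lemma sqrt_pow_le_factorial_mul_exp {T x : ℝ} (hx : 0 ≤ x) (h : T ≤ x) (k : ℕ) :
    √x ^ k ≤ k ! * exp (1 - T / 4) * exp (1 / 2 * x) := by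
  have hsqrt : √x ≤ 1 + x / 4 := by nlinarith [sq_sqrt hx, sq_nonneg (√x - 2)]
  calc √x ^ k ≤ k ! * exp √x := by
        have := pow_div_factorial_le_exp _ (sqrt_nonneg x) k
        rwa [div_le_iff₀ (by positivity), mul_comm] at this
    _ ≤ k ! * exp (1 - T / 4 + 1 / 2 * x) := by gcongr; linarith
    _ = k ! * exp (1 - T / 4) * exp (1 / 2 * x) := by rw [exp_add, mul_assoc]

lemma inv_mul_sqrt_pow_eq_rpow {x : ℝ} (hx : 0 < x) (k : ℕ) :
    x⁻¹ * √x ^ k = x ^ ((k : ℝ) / 2 - 1) := by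
  rw [sqrt_eq_rpow, ← rpow_mul_natCast hx.le, rpow_sub hx, rpow_one, div_eq_inv_mul]
  ring_nf

lemma norm_inv_mul_trace_Ghat_pow_le {m k : ℕ} (hm : m ≠ 0) (hk : k ≠ 0)
    (g : Fin m × Fin m → ℂ) :
    ‖(m : ℂ)⁻¹ * trace (Ghat m g ^ k)‖
      ≤ (m : ℝ) ^ ((k : ℝ) / 2 - 1) * (k ! * exp (1 - (m : ℝ) ^ (2 * m) / 4))
          * exp (1 / 2 * ∑ p, ‖g p‖ ^ 2) := by
  set S := ∑ p, ‖g p‖ ^ 2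
  have hm' : (0 : ℝ) < m := by positivity
  rcases le_or_gt S ((m : ℝ) ^ (2 * m)) with hS | hS
  · rw [Ghat_eq_zero hS, zero_pow hk, trace_zero, mul_zero, norm_zero]
    positivity
  calc ‖(m : ℂ)⁻¹ * trace (Ghat m g ^ k)‖ ≤ (m : ℝ)⁻¹ * (m * (√S / √m)) ^ k := by
        rw [norm_mul, norm_inv, Complex.norm_natCast]
        gcongr
        simpa using norm_trace_pow_le (norm_Ghat_apply_le m g) hk
    _ = (m : ℝ)⁻¹ * √m ^ k * √S ^ k := by
        have hsqrt : √(m : ℝ) ≠ 0 := by positivity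
        have : (m : ℝ) * (√S / √m) = √m * √S := by
          rw [mul_div_assoc', div_eq_iff hsqrt, mul_right_comm, mul_self_sqrt hm'.le]
        rw [this, mul_pow, mul_assoc]
    _ ≤ _ := by
        rw [inv_mul_sqrt_pow_eq_rpow hm', mul_assoc]
        gcongr
        exact sqrt_pow_le_factorial_mul_exp (by positivity) hS.le k

lemma Nat.mul_self_le_pow_self : ∀ m : ℕ, m * m ≤ m ^ m
  | 0 => Nat.zero_le _
  | 1 => le_rfl
  | m + 2 => by
    rw [← sq]
    exact Nat.pow_le_pow_right (by omega) (by omega)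

lemma exp_one_sub_pow_div_four_mul_two_pow_le {m : ℕ} (hm : 1 ≤ m) :
    exp (1 - (m : ℝ) ^ (2 * m) / 4) * 2 ^ (m * m)
      ≤ exp 5 * exp (-(m : ℝ) ^ ((m : ℝ) - 1 / 2)) := by
  have hsq : (m : ℝ) * m ≤ (m : ℝ) ^ m := by exact_mod_cast Nat.mul_self_le_pow_self m
  have hrpow : (m : ℝ) ^ ((m : ℝ) - 1 / 2) ≤ (m : ℝ) ^ m := by
    rw [← rpow_natCast]
    exact rpow_le_rpow_of_exponent_le (by exact_mod_cast hm) (by linarith)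
  have htwo : (2 : ℝ) ^ (m * m) ≤ exp (m * m) := by
    calc (2 : ℝ) ^ (m * m) ≤ exp 1 ^ (m * m) := by
          gcongr
          linarith [add_one_le_exp (1 : ℝ)]
      _ = exp (m * m) := by rw [← exp_nat_mul]; push_cast; ring_nf
  calc exp (1 - (m : ℝ) ^ (2 * m) / 4) * 2 ^ (m * m)
        ≤ exp (1 - ((m : ℝ) ^ m) ^ 2 / 4) * exp (m * m) := by
        rw [pow_mul']
        gcongr
    _ ≤ exp (5 + -(m : ℝ) ^ ((m : ℝ) - 1 / 2)) := by
        rw [← exp_add, exp_le_exp]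
        nlinarith [sq_nonneg ((m : ℝ) ^ m - 4)]
    _ = exp 5 * exp (-(m : ℝ) ^ ((m : ℝ) - 1 / 2)) := exp_add _ _

lemma norm_tauHat_le {m k : ℕ} (hm : 1 ≤ m) (hk : k ≠ 0) :
    ‖tauHat m k‖
      ≤ k ! * exp 5 * (m : ℝ) ^ ((k : ℝ) / 2 - 1) * exp (-(m : ℝ) ^ ((m : ℝ) - 1 / 2)) := by
  set c := (m : ℝ) ^ ((k : ℝ) / 2 - 1) * (k ! * exp (1 - (m : ℝ) ^ (2 * m) / 4))
  calc ‖tauHat m k‖ ≤ ∫ g, ‖(m : ℂ)⁻¹ * trace (Ghat m g ^ k)‖ ∂gaussianFamily m :=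
        norm_integral_le_integral_norm _
    _ ≤ ∫ g, c * exp (1 / 2 * ∑ p, ‖g p‖ ^ 2) ∂gaussianFamily m :=
        integral_mono_of_nonneg (ae_of_all _ fun _ => norm_nonneg _)
          ((integrable_exp_mul_sum_sq_norm_gaussianFamily (by norm_num) m).const_mul c)
          (ae_of_all _ (norm_inv_mul_trace_Ghat_pow_le (m := m) (by omega) hk))
    _ = (m : ℝ) ^ ((k : ℝ) / 2 - 1) * k ! * (exp (1 - (m : ℝ) ^ (2 * m) / 4) * 2 ^ (m * m)) := by
        rw [integral_const_mul, integral_exp_mul_sum_sq_norm_gaussianFamily (by norm_num)]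
        norm_num [c]
        ring
    _ ≤ (m : ℝ) ^ ((k : ℝ) / 2 - 1) * k ! * (exp 5 * exp (-(m : ℝ) ^ ((m : ℝ) - 1 / 2))) :=
        mul_le_mul_of_nonneg_left (exp_one_sub_pow_div_four_mul_two_pow_le hm) (by positivity)
    _ = _ := by ring

lemma tendsto_rpow_mul_exp_neg_rpow_self (k : ℕ) :
    Tendsto (fun m : ℕ => (m : ℝ) ^ ((k : ℝ) / 2 - 1) * exp (-(m : ℝ) ^ ((m : ℝ) - 1 / 2)))
      atTop (𝓝 0) := by
  refine squeeze_zero' (Eventually.of_forall fun m => by positivity) ?_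
    ((tendsto_pow_mul_exp_neg_atTop_nhds_zero k).comp tendsto_natCast_atTop_atTop)
  filter_upwards [eventually_ge_atTop 1] with m hm
  have hm' : (1 : ℝ) ≤ m := by exact_mod_cast hm
  have hexp : (m : ℝ) ≤ (m : ℝ) ^ ((m : ℝ) - 1 / 2) := by
    rcases hm.eq_or_lt with rfl | hm2
    · norm_num
    · have : (2 : ℝ) ≤ m := by exact_mod_cast hm2
      conv_lhs => rw [← rpow_one (m : ℝ)]
      exact rpow_le_rpow_of_exponent_le hm' (by linarith)
  dsimp only [Function.comp]
  gcongr
  rw [← rpow_natCast]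
  exact rpow_le_rpow_of_exponent_le hm' (by linarith [(k.cast_nonneg : (0 : ℝ) ≤ k)])

/-- For every `k ≥ 1` there is `C > 0` such that for every `m ≥ 1`,
`|τ'_m((Ĝ^m)^k)| ≤ C · m^{k/2 − 1} · e^{-m^{m−1/2}}`; in particular
`τ'_m((Ĝ^m)^k) → 0` as `m → ∞`. -/
theorem tauHat_pow_bound (k : ℕ) (hk : 1 ≤ k) :
    (∃ C : ℝ, 0 < C ∧ ∀ m : ℕ, 1 ≤ m →
        ‖tauHat m k‖
          ≤ C * (m : ℝ) ^ ((k : ℝ) / 2 - 1) * Real.exp (-(m : ℝ) ^ ((m : ℝ) - 1 / 2))) ∧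
      Filter.Tendsto (fun m : ℕ => tauHat m k) Filter.atTop (nhds 0) := by
  have hk0 : k ≠ 0 := by omega
  refine ⟨⟨k ! * exp 5, by positivity, fun m hm => norm_tauHat_le hm hk0⟩, ?_⟩
  have hlim := (tendsto_rpow_mul_exp_neg_rpow_self k).const_mul (k ! * exp 5)
  rw [mul_zero] at hlim
  refine squeeze_zero_norm' ?_ hlim
  filter_upwards [eventually_ge_atTop 1] with m hm
  exact (norm_tauHat_le hm hk0).trans_eq (mul_assoc _ _ _)
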